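/- arXiv:2407.02624 — 2 statements merged into one kernel-verified Lean document; each statement's English description precedes it below -/
import Mathlib

section
/- Single-source constant-witness existence: For any instance (G = (V, E, α), v_s, k) of Reach Improvement with optimum reach Υ* = max over sets F of at most k new edges of reach_{G+F}(v_s), there exists a set S of at most 2k new edges, all incident to v_s, such that for every vertex u ∈ V there exists W ⊆ S with |W| ≤ 1 and prox_{G+W}(v_s, u) ≥ Υ*/(2k + 2); that is, S is a (1, Υ*/(2k+2))-witnessing solution of size at most 2k. -/
open scoped Classical

variable {V : Type*} [Fintype V] [DecidableEq V]

/-- The proximity of `u` and `v` in the information graph `(V, E, α)`: the probability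
that `u` and `v` are connected in a graph obtained by retaining each edge of `E`
independently with probability `α`. -/
noncomputable def prox (E : Finset (Sym2 V)) (α : ℝ) (u v : V) : ℝ :=
  ∑ F ∈ E.powerset,
    if (SimpleGraph.fromEdgeSet (F : Set (Sym2 V))).Reachable u v then
      α ^ F.card * (1 - α) ^ (E \ F).card
    else 0

/-- The broadcast of an information graph: the minimum proximity over pairs of distinct
vertices. -/
noncomputable def broadcast (E : Finset (Sym2 V)) (α : ℝ) : ℝ :=
  ⨅ p : {p : V × V // p.1 ≠ p.2}, prox E α p.1.1 p.1.2

/-- The optimum broadcast achievable by adding at most `k` vertex pairs disjoint from `E`. -/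
noncomputable def optBroadcast (E : Finset (Sym2 V)) (α : ℝ) (k : ℕ) : ℝ :=
  ⨆ F : {F : Finset (Sym2 V) // F.card ≤ k ∧ ∀ e ∈ F, e ∉ E}, broadcast (E ∪ F.1) α

/-- The reach of a vertex `v`: the minimum proximity of `v` to any other vertex. -/
noncomputable def reach (E : Finset (Sym2 V)) (α : ℝ) (v : V) : ℝ :=
  ⨅ u : {u : V // u ≠ v}, prox E α v u.1

/-- The optimum reach of a source vertex `vs` achievable by adding at most `k`
vertex pairs disjoint from `E`. -/
noncomputable def optReach (E : Finset (Sym2 V)) (α : ℝ) (k : ℕ) (vs : V) : ℝ :=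
  ⨆ F : {F : Finset (Sym2 V) // F.card ≤ k ∧ ∀ e ∈ F, e ∉ E}, reach (E ∪ F.1) α vs

/-- The probability that, in a sampled graph, all edges of at least one member of the
family `P` of edge-lists are retained. -/
noncomputable def prPaths (E : Finset (Sym2 V)) (α : ℝ) (P : Set (List (Sym2 V))) : ℝ :=
  ∑ F ∈ E.powerset,
    if ∃ p ∈ P, ∀ e ∈ p, e ∈ F then α ^ F.card * (1 - α) ^ (E \ F).card
    else 0

/-!
Fix an optimal set `D` of at most `k` new edges and let `S` consist of the star edges `vs y` for
the endpoints `y` of the edges of `D`. If `vs` reaches `u` in a sample of `E ∪ D`, then either it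
does so inside `E`, or the last new edge of the path has an endpoint `y` that reaches `u` inside
`E`; by independence of that edge, the latter has probability at most `α · prox_E(y, u)`. So by
the union bound `Υ* ≤ prox_E(vs, u) + Σ_y α · prox_E(y, u)`, a sum of at most `2k + 1` terms, one
of which is therefore at least `Υ*/(2k + 2)`. Finally, adding the single star edge `vs y` makes
the proximity of `vs` and `u` at least `α · prox_E(y, u)`.
-/
section SampleProb

variable {β : Type*} [DecidableEq β] {E D : Finset β} {p : ℝ} {Q R : Finset β → Prop}

noncomputable def sampleProb (E : Finset β) (p : ℝ) (Q : Finset β → Prop) : ℝ :=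
  ∑ F ∈ E.powerset, if Q F then p ^ F.card * (1 - p) ^ (E \ F).card else 0

lemma pow_mul_one_sub_pow_nonneg (hp0 : 0 ≤ p) (hp1 : p ≤ 1) (m n : ℕ) :
    0 ≤ p ^ m * (1 - p) ^ n :=
  mul_nonneg (pow_nonneg hp0 m) (pow_nonneg (sub_nonneg.2 hp1) n)

lemma sampleProb_nonneg (hp0 : 0 ≤ p) (hp1 : p ≤ 1) : 0 ≤ sampleProb E p Q :=
  Finset.sum_nonneg fun _ _ => by
    split_ifs
    exacts [pow_mul_one_sub_pow_nonneg hp0 hp1 _ _, le_rfl]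

lemma sampleProb_congr (h : ∀ F ⊆ E, Q F ↔ R F) : sampleProb E p Q = sampleProb E p R :=
  Finset.sum_congr rfl fun F hF => if_congr (h F (Finset.mem_powerset.1 hF)) rfl rfl

lemma sampleProb_false : sampleProb E p (fun _ => False) = 0 := by
  simp [sampleProb]

lemma sampleProb_true : sampleProb E p (fun _ => True) = 1 := by
  simpa [sampleProb] using (Finset.prod_add (fun _ => p) (fun _ => 1 - p) E).symm

lemma sampleProb_mono (hp0 : 0 ≤ p) (hp1 : p ≤ 1) (h : ∀ F ⊆ E, Q F → R F) :
    sampleProb E p Q ≤ sampleProb E p R :=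
  Finset.sum_le_sum fun F hF => by
    have hQR := h F (Finset.mem_powerset.1 hF)
    have hw := pow_mul_one_sub_pow_nonneg hp0 hp1 F.card (E \ F).card
    split_ifs <;> tauto

lemma sampleProb_le_one (hp0 : 0 ≤ p) (hp1 : p ≤ 1) : sampleProb E p Q ≤ 1 :=
  sampleProb_true (E := E) (p := p) ▸ sampleProb_mono hp0 hp1 fun _ _ _ => trivial

lemma sampleProb_or_le (hp0 : 0 ≤ p) (hp1 : p ≤ 1) :
    sampleProb E p (fun F => Q F ∨ R F) ≤ sampleProb E p Q + sampleProb E p R := by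
  simp only [sampleProb, ← Finset.sum_add_distrib]
  refine Finset.sum_le_sum fun F _ => ?_
  have hw := pow_mul_one_sub_pow_nonneg hp0 hp1 F.card (E \ F).card
  split_ifs <;> first | linarith | tauto

lemma sampleProb_exists_le {ι : Type*} (hp0 : 0 ≤ p) (hp1 : p ≤ 1) (s : Finset ι)
    (Q : ι → Finset β → Prop) :
    sampleProb E p (fun F => ∃ i ∈ s, Q i F) ≤ ∑ i ∈ s, sampleProb E p (Q i) := by
  simp only [sampleProb]
  rw [Finset.sum_comm]
  refine Finset.sum_le_sum fun F _ => ?_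
  have hw := pow_mul_one_sub_pow_nonneg hp0 hp1 F.card (E \ F).card
  have hterm : ∀ i ∈ s, 0 ≤ if Q i F then p ^ F.card * (1 - p) ^ (E \ F).card else 0 :=
    fun i _ => by split_ifs <;> simp [hw]
  split_ifs with h
  · obtain ⟨i, hi, hQ⟩ := h
    simpa [hQ] using Finset.single_le_sum hterm hi
  · exact Finset.sum_nonneg hterm

lemma sampleProb_insert {e : β} (he : e ∉ E) :
    sampleProb (insert e E) p Q =
      (1 - p) * sampleProb E p Q + p * sampleProb E p (fun F => Q (insert e F)) := by
  rw [sampleProb, Finset.sum_powerset_insert he, sampleProb, sampleProb, Finset.mul_sum,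
    Finset.mul_sum]
  congr 1 <;> refine Finset.sum_congr rfl fun F hF => ?_
  · have heF : e ∉ E \ F := fun h => he (Finset.mem_sdiff.1 h).1
    rw [Finset.insert_sdiff_of_notMem _ fun h => he (Finset.mem_powerset.1 hF h),
      Finset.card_insert_of_notMem heF]
    split_ifs <;> ring
  · rw [Finset.insert_sdiff_insert, Finset.sdiff_insert_of_notMem he,
      Finset.card_insert_of_notMem fun h => he (Finset.mem_powerset.1 hF h)]
    split_ifs <;> ring

lemma sampleProb_union_inter (hD : Disjoint E D) :
    sampleProb (E ∪ D) p (fun F => Q (F ∩ E)) = sampleProb E p Q := by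
  induction D using Finset.induction_on with
  | empty =>
    rw [Finset.union_empty]
    exact sampleProb_congr fun F hF => by rw [Finset.inter_eq_left.2 hF]
  | insert d D hd ih =>
    rw [Finset.disjoint_insert_right] at hD
    have hdED : d ∉ E ∪ D := by simp [hD.1, hd]
    simp_rw [Finset.union_insert, sampleProb_insert hdED, Finset.insert_inter_of_notMem hD.1,
      ih hD.2]
    ring

lemma sampleProb_mem_inter {e : β} (hD : Disjoint E D) (he : e ∈ D) :
    sampleProb (E ∪ D) p (fun F => e ∈ F ∧ Q (F ∩ E)) = p * sampleProb E p Q := by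
  have heE : e ∉ E := Finset.disjoint_right.1 hD he
  have heE' : e ∉ E ∪ D.erase e := by simp [heE]
  have hD' : Disjoint E (D.erase e) := hD.mono_right (Finset.erase_subset e D)
  rw [← Finset.insert_erase he, Finset.union_insert, sampleProb_insert heE',
    sampleProb_congr (R := fun _ => False) fun F hF => iff_false_intro fun h => heE' (hF h.1),
    sampleProb_false, sampleProb_congr (R := fun F => Q (F ∩ E)) fun F _ => by
      simp [Finset.insert_inter_of_notMem heE], sampleProb_union_inter hD']
  ring

end SampleProb

section EdgeReachable

variable {U : Type*}

abbrev EdgeReachable (F : Finset (Sym2 U)) (a b : U) : Prop :=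
  (SimpleGraph.fromEdgeSet (F : Set (Sym2 U))).Reachable a b

lemma edgeReachable_of_mk_mem {F : Finset (Sym2 U)} {a b : U} (h : s(a, b) ∈ F) :
    EdgeReachable F a b := by
  obtain rfl | hab := eq_or_ne a b
  · rfl
  · exact SimpleGraph.Adj.reachable (SimpleGraph.fromEdgeSet_adj _ |>.2 ⟨h, hab⟩)

lemma EdgeReachable.mono {F F' : Finset (Sym2 U)} {a b : U} (hF : F ⊆ F')
    (h : EdgeReachable F a b) : EdgeReachable F' a b :=
  SimpleGraph.Reachable.mono (SimpleGraph.fromEdgeSet_mono (Finset.coe_subset.2 hF)) h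

/-- Split a path at its last edge outside `E`. -/
lemma edgeReachable_inter_or_exists_last_edge [DecidableEq U] {F E : Finset (Sym2 U)} {a b : U}
    (h : EdgeReachable F a b) :
    EdgeReachable (F ∩ E) a b ∨ ∃ f ∈ F, f ∉ E ∧ ∃ y ∈ f, EdgeReachable (F ∩ E) y b := by
  obtain ⟨w⟩ := h
  induction w with
  | nil => exact Or.inl .rfl
  | @cons x c _ hxc _ ih =>
    obtain ⟨hxcF, hne⟩ := SimpleGraph.fromEdgeSet_adj _ |>.1 hxc
    by_cases hxcE : s(x, c) ∈ E
    · refine ih.imp_left fun hc => .trans ?_ hc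
      exact edgeReachable_of_mk_mem (Finset.mem_inter.2 ⟨hxcF, hxcE⟩)
    · exact .inr (ih.elim (fun hc => ⟨s(x, c), hxcF, hxcE, c, Sym2.mem_mk_right x c, hc⟩) id)

lemma Sym2.card_toFinset_le_two [DecidableEq U] (z : Sym2 U) : z.toFinset.card ≤ 2 := by
  rw [Sym2.card_toFinset]
  split_ifs <;> norm_num

lemma card_biUnion_toFinset_le [DecidableEq U] (D : Finset (Sym2 U)) :
    (D.biUnion Sym2.toFinset).card ≤ 2 * D.card := by
  calc (D.biUnion Sym2.toFinset).card ≤ ∑ f ∈ D, f.toFinset.card := Finset.card_biUnion_le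
    _ ≤ ∑ _f ∈ D, 2 := Finset.sum_le_sum fun f _ => Sym2.card_toFinset_le_two f
    _ = 2 * D.card := by rw [Finset.sum_const, smul_eq_mul, mul_comm]

end EdgeReachable

section Prox

variable {E D : Finset (Sym2 V)} {α : ℝ}

lemma prox_eq_sampleProb (u v : V) :
    prox E α u v = sampleProb E α (fun F => EdgeReachable F u v) := by
  unfold prox sampleProb
  -- `prox` decides reachability with a computable instance, `sampleProb` classically
  exact Finset.sum_congr rfl fun F _ => by congr

lemma prox_nonneg (hα0 : 0 ≤ α) (hα1 : α ≤ 1) (u v : V) : 0 ≤ prox E α u v :=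
  prox_eq_sampleProb (E := E) u v ▸ sampleProb_nonneg hα0 hα1

lemma prox_le_one (hα0 : 0 ≤ α) (hα1 : α ≤ 1) (u v : V) : prox E α u v ≤ 1 :=
  prox_eq_sampleProb (E := E) u v ▸ sampleProb_le_one hα0 hα1

lemma prox_self (v : V) : prox E α v v = 1 := by
  rw [prox_eq_sampleProb, sampleProb_congr (R := fun _ => True) fun _ _ => iff_of_true .rfl trivial,
    sampleProb_true]

lemma prox_mono (hα0 : 0 ≤ α) (hα1 : α ≤ 1) {E' : Finset (Sym2 V)} (h : E ⊆ E') (u v : V) :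
    prox E α u v ≤ prox E' α u v := by
  have hE' : E ∪ E' \ E = E' := Finset.union_sdiff_of_subset h
  rw [prox_eq_sampleProb, prox_eq_sampleProb, ← hE',
    ← sampleProb_union_inter (Q := fun G => EdgeReachable G u v) Finset.disjoint_sdiff]
  exact sampleProb_mono hα0 hα1 fun F _ => EdgeReachable.mono Finset.inter_subset_left

lemma prox_insert_le_sampleProb (hα0 : 0 ≤ α) (hα1 : α ≤ 1) {e : Sym2 V} (he : e ∉ E) (a u : V) :
    prox (insert e E) α a u ≤ sampleProb E α (fun F => EdgeReachable (insert e F) a u) := by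
  have h := sampleProb_mono (E := E) hα0 hα1 fun (F : Finset (Sym2 V)) _ =>
    EdgeReachable.mono (a := a) (b := u) (Finset.subset_insert e F)
  rw [prox_eq_sampleProb, sampleProb_insert he]
  nlinarith [mul_le_mul_of_nonneg_left h (sub_nonneg.2 hα1)]

lemma mul_sampleProb_le_prox_insert (hα0 : 0 ≤ α) (hα1 : α ≤ 1) {e : Sym2 V} (he : e ∉ E)
    (a u : V) :
    α * sampleProb E α (fun F => EdgeReachable (insert e F) a u) ≤ prox (insert e E) α a u := by
  rw [prox_eq_sampleProb, sampleProb_insert he]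
  nlinarith [mul_nonneg (sub_nonneg.2 hα1)
    (sampleProb_nonneg (E := E) (Q := fun F => EdgeReachable F a u) hα0 hα1)]

lemma mul_prox_le_prox_insert (hα0 : 0 ≤ α) (hα1 : α ≤ 1) (v y u : V) :
    α * prox E α y u ≤ prox (insert s(v, y) E) α v u := by
  set e := s(v, y)
  -- going through `E.erase e` covers the case `e ∈ E` as well
  have he : e ∉ E.erase e := Finset.notMem_erase e E
  have hins : insert e (E.erase e) = insert e E := by
    rw [← Finset.erase_insert_eq_erase, Finset.insert_erase (Finset.mem_insert_self e E)]
  calc α * prox E α y u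
      ≤ α * prox (insert e (E.erase e)) α y u := by
        rw [hins]; gcongr; exact prox_mono hα0 hα1 (Finset.subset_insert e E) y u
    _ ≤ α * sampleProb (E.erase e) α (fun F => EdgeReachable (insert e F) y u) := by
        gcongr; exact prox_insert_le_sampleProb hα0 hα1 he y u
    _ ≤ α * sampleProb (E.erase e) α (fun F => EdgeReachable (insert e F) v u) := by
        gcongr
        exact sampleProb_mono hα0 hα1 fun F _ =>
          (edgeReachable_of_mk_mem (Finset.mem_insert_self e F)).trans
    _ ≤ prox (insert e E) α v u := hins ▸ mul_sampleProb_le_prox_insert hα0 hα1 he v u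

lemma prox_union_le (hα0 : 0 ≤ α) (hα1 : α ≤ 1) (hD : Disjoint E D) (a u : V) :
    prox (E ∪ D) α a u ≤ prox E α a u + ∑ f ∈ D, ∑ y ∈ f.toFinset, α * prox E α y u := by
  calc prox (E ∪ D) α a u
      ≤ sampleProb (E ∪ D) α (fun F => EdgeReachable (F ∩ E) a u ∨
          ∃ f ∈ D, ∃ y ∈ f.toFinset, f ∈ F ∧ EdgeReachable (F ∩ E) y u) := by
        rw [prox_eq_sampleProb]
        refine sampleProb_mono hα0 hα1 fun F hF h => ?_
        refine (edgeReachable_inter_or_exists_last_edge h).imp_right ?_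
        rintro ⟨f, hfF, hfE, y, hy, hyu⟩
        have hfD : f ∈ D := (Finset.mem_union.1 (hF hfF)).resolve_left hfE
        exact ⟨f, hfD, y, Sym2.mem_toFinset.2 hy, hfF, hyu⟩
    _ ≤ sampleProb (E ∪ D) α (fun F => EdgeReachable (F ∩ E) a u) + ∑ f ∈ D, ∑ y ∈ f.toFinset,
          sampleProb (E ∪ D) α (fun F => f ∈ F ∧ EdgeReachable (F ∩ E) y u) := by
        refine (sampleProb_or_le hα0 hα1).trans (add_le_add_right ?_ _)
        exact (sampleProb_exists_le hα0 hα1 D _).trans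
          (Finset.sum_le_sum fun f _ => sampleProb_exists_le hα0 hα1 _ _)
    _ = prox E α a u + ∑ f ∈ D, ∑ y ∈ f.toFinset, α * prox E α y u := by
        rw [sampleProb_union_inter (Q := fun G => EdgeReachable G a u) hD, prox_eq_sampleProb]
        congr 1
        refine Finset.sum_congr rfl fun f hf => Finset.sum_congr rfl fun y _ => ?_
        rw [prox_eq_sampleProb]
        exact sampleProb_mem_inter (Q := fun G => EdgeReachable G y u) hD hf

lemma prox_union_le_of_forall_le (hα0 : 0 ≤ α) (hα1 : α ≤ 1) (hD : Disjoint E D) {a u : V}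
    {b : ℝ} (ha : prox E α a u ≤ b) (hend : ∀ f ∈ D, ∀ y ∈ f, α * prox E α y u ≤ b) :
    prox (E ∪ D) α a u ≤ (2 * D.card + 1) * b := by
  have hb : 0 ≤ b := (prox_nonneg hα0 hα1 a u).trans ha
  have hf : ∀ f ∈ D, ∑ y ∈ f.toFinset, α * prox E α y u ≤ 2 * b := fun f hf =>
    calc ∑ y ∈ f.toFinset, α * prox E α y u
        ≤ f.toFinset.card * b :=
          Finset.sum_le_card_nsmul _ _ _ (fun y hy => hend f hf y (Sym2.mem_toFinset.1 hy)) |>.trans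
            (by rw [nsmul_eq_mul])
      _ ≤ 2 * b := by
          gcongr
          exact_mod_cast Sym2.card_toFinset_le_two f
  calc prox (E ∪ D) α a u
      ≤ b + ∑ f ∈ D, 2 * b :=
        (prox_union_le hα0 hα1 hD a u).trans (add_le_add ha (Finset.sum_le_sum hf))
    _ = (2 * D.card + 1) * b := by rw [Finset.sum_const, nsmul_eq_mul]; ring

end Prox

section Witness

variable {E D : Finset (Sym2 V)} {α : ℝ}

lemma exists_prox_union_le_mul_prox_star (hα0 : 0 ≤ α) (hα1 : α ≤ 1) (hED : Disjoint E D)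
    {S : Finset (Sym2 V)} {v : V} (hS : ∀ f ∈ D, ∀ y ∈ f, {s(v, y)} \ E ⊆ S) (u : V) :
    ∃ W ⊆ S, W.card ≤ 1 ∧ prox (E ∪ D) α v u ≤ (2 * D.card + 1) * prox (E ∪ W) α v u := by
  obtain ⟨W, hW, hWmax⟩ := (S.powerset.filter (·.card ≤ 1)).exists_max_image
    (fun W => prox (E ∪ W) α v u) ⟨∅, by simp⟩
  rw [Finset.mem_filter, Finset.mem_powerset] at hW
  refine ⟨W, hW.1, hW.2, prox_union_le_of_forall_le hα0 hα1 hED ?_ fun f hf y hy => ?_⟩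
  · simpa using hWmax ∅ (by simp)
  · have hstar := hWmax ({s(v, y)} \ E) <| Finset.mem_filter.2 ⟨Finset.mem_powerset.2
      (hS f hf y hy), (Finset.card_le_card Finset.sdiff_subset).trans (Finset.card_singleton _).le⟩
    rw [Finset.union_sdiff_self_eq_union, Finset.union_singleton] at hstar
    exact (mul_prox_le_prox_insert hα0 hα1 v y u).trans hstar

end Witness

lemma reach_le_prox {E : Finset (Sym2 V)} {α : ℝ} {v u : V} (h : u ≠ v) :
    reach E α v ≤ prox E α v u :=
  ciInf_le (Set.finite_range _).bddBelow (⟨u, h⟩ : {u // u ≠ v})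

lemma reach_le_one {E : Finset (Sym2 V)} {α : ℝ} (hα0 : 0 ≤ α) (hα1 : α ≤ 1) (v : V) :
    reach E α v ≤ 1 := by
  rcases isEmpty_or_nonempty {u : V // u ≠ v} with h | ⟨⟨u, hu⟩⟩
  · rw [reach, iInf_of_isEmpty, Real.sInf_empty]
    exact zero_le_one
  · exact (reach_le_prox hu).trans (prox_le_one hα0 hα1 v u)

lemma exists_optReach_le_prox {α : ℝ} (hα0 : 0 ≤ α) (hα1 : α ≤ 1) (E : Finset (Sym2 V)) (k : ℕ)
    (vs : V) : ∃ D : Finset (Sym2 V), D.card ≤ k ∧ Disjoint E D ∧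
      ∀ u, optReach E α k vs ≤ prox (E ∪ D) α vs u := by
  have : Nonempty {D : Finset (Sym2 V) // D.card ≤ k ∧ ∀ e ∈ D, e ∉ E} := ⟨⟨∅, by simp⟩⟩
  obtain ⟨D, hD⟩ := Finite.exists_max
    fun D : {D : Finset (Sym2 V) // D.card ≤ k ∧ ∀ e ∈ D, e ∉ E} => reach (E ∪ D.1) α vs
  refine ⟨D.1, D.2.1, Finset.disjoint_right.2 D.2.2, fun u => (ciSup_le hD).trans ?_⟩
  obtain rfl | hu := eq_or_ne u vs
  · exact prox_self (E := E ∪ D.1) (α := α) u ▸ reach_le_one hα0 hα1 u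
  · exact reach_le_prox hu

/-- single-source constant-witness existence. -/
theorem single_source_constant_witness
    (E : Finset (Sym2 V)) (α : ℝ) (hα0 : 0 ≤ α) (hα1 : α ≤ 1)
    (vs : V) (k : ℕ) :
    ∃ S : Finset (Sym2 V), S.card ≤ 2 * k ∧ (∀ e ∈ S, e ∉ E ∧ vs ∈ e) ∧
      ∀ u : V, ∃ W ⊆ S, W.card ≤ 1 ∧
        optReach E α k vs / (2 * (k : ℝ) + 2) ≤ prox (E ∪ W) α vs u := by
  obtain ⟨D, hDk, hED, hopt⟩ := exists_optReach_le_prox hα0 hα1 E k vs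
  set S := (D.biUnion Sym2.toFinset).image (fun y => s(vs, y)) \ E
  have hS : ∀ f ∈ D, ∀ y ∈ f, {s(vs, y)} \ E ⊆ S := fun f hf y hy =>
    Finset.sdiff_subset_sdiff (Finset.singleton_subset_iff.2 (Finset.mem_image_of_mem _
      (Finset.mem_biUnion.2 ⟨f, hf, Sym2.mem_toFinset.2 hy⟩))) le_rfl
  refine ⟨S, ?_, fun e he => ?_, fun u => ?_⟩
  · calc S.card ≤ (D.biUnion Sym2.toFinset).card :=
          (Finset.card_le_card Finset.sdiff_subset).trans Finset.card_image_le
      _ ≤ 2 * D.card := card_biUnion_toFinset_le D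
      _ ≤ 2 * k := by omega
  · obtain ⟨he, heE⟩ := Finset.mem_sdiff.1 he
    obtain ⟨y, -, rfl⟩ := Finset.mem_image.1 he
    exact ⟨heE, Sym2.mem_mk_left vs y⟩
  · obtain ⟨W, hWS, hW1, hW⟩ := exists_prox_union_le_mul_prox_star hα0 hα1 hED hS u
    refine ⟨W, hWS, hW1, ?_⟩
    have hDk' : (D.card : ℝ) ≤ k := by exact_mod_cast hDk
    have hW0 := prox_nonneg (E := E ∪ W) hα0 hα1 vs u
    rw [div_le_iff₀ (by positivity)]
    nlinarith [hopt u]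
end

section
/- Low-probability path bound: Let H = (V_H, E_H, δ) be an information graph on n_H vertices in which every edge is retained independently with probability δ, where 0 ≤ δ < 1/(2 n_H). Let u, v ∈ V_H be vertices whose graph distance in H is exactly c, for some integer c ≥ 1. Then prox_H(u, v) ≤ 2 n_H^{c−1} δ^c. -/
open scoped Classical

variable {V : Type*} [Fintype V] [DecidableEq V]

/-!
A union bound over paths. If `u` and `v` are connected in the sampled graph, some path of `H`
from `u` to `v` is retained, and a fixed path with `k` edges is retained with probability
`δ ^ k`. Such a path has length at least `c = dist u v` and is determined by its `k - 1`
interior vertices, so there are at most `n ^ (k - 1)` of them. Hence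
`prox u v ≤ ∑_{k ≥ c} n ^ (k - 1) δ ^ k`, a geometric series of ratio `n δ ≤ 1/2`, which is
at most `2 n ^ (c - 1) δ ^ c`.
-/

open Finset SimpleGraph

theorem Finset.sum_filter_superset_pow_card_mul_pow_card_sdiff {α R : Type*} [DecidableEq α]
    [CommRing R] {E S : Finset α} (hS : S ⊆ E) (δ : R) :
    ∑ F ∈ E.powerset with S ⊆ F, δ ^ #F * (1 - δ) ^ #(E \ F) = δ ^ #S := by
  -- `∏ e ∈ E, (δ + [e ∉ S] (1 - δ)) = δ ^ #S` expands to the left-hand side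
  have hprod := prod_add (fun _ ↦ δ) (fun e ↦ if e ∉ S then 1 - δ else 0) E
  have hcond : ∀ F ∈ E.powerset, (∀ e ∈ E \ F, e ∉ S) ↔ S ⊆ F := fun F _ ↦
    ⟨fun h e he ↦ by_contra fun heF ↦ h e (mem_sdiff.2 ⟨hS he, heF⟩) he,
     fun h e he heS ↦ (mem_sdiff.1 he).2 (h heS)⟩
  have hfactor : ∀ e ∈ E, (δ + if e ∉ S then 1 - δ else 0) = if e ∈ S then δ else 1 := by
    intro e _; split_ifs <;> ring
  simp only [prod_ite_zero, prod_const, mul_ite, mul_zero] at hprod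
  rw [sum_filter, ← sum_congr rfl fun F hF ↦ if_congr (hcond F hF) rfl rfl, ← hprod,
    prod_congr rfl hfactor, prod_ite_mem, inter_eq_right.2 hS, prod_const]

theorem Finset.sum_filter_pow_card_mul_pow_card_sdiff_le {α ι R : Type*} [DecidableEq α]
    [CommRing R] [PartialOrder R] [IsOrderedRing R] {E : Finset α} {δ : R}
    (hδ₀ : 0 ≤ δ) (hδ₁ : δ ≤ 1) (Q : Finset α → Prop) [DecidablePred Q]
    (I : Finset ι) (S : ι → Finset α) (hSE : ∀ i ∈ I, S i ⊆ E)
    (hQ : ∀ F ⊆ E, Q F → ∃ i ∈ I, S i ⊆ F) :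
    ∑ F ∈ E.powerset with Q F, δ ^ #F * (1 - δ) ^ #(E \ F) ≤ ∑ i ∈ I, δ ^ #(S i) := by
  have hw : ∀ F : Finset α, 0 ≤ δ ^ #F * (1 - δ) ^ #(E \ F) := fun F ↦
    mul_nonneg (pow_nonneg hδ₀ _) (pow_nonneg (sub_nonneg.2 hδ₁) _)
  calc ∑ F ∈ E.powerset with Q F, δ ^ #F * (1 - δ) ^ #(E \ F)
      ≤ ∑ F ∈ E.powerset, ∑ i ∈ I, if S i ⊆ F then δ ^ #F * (1 - δ) ^ #(E \ F) else 0 := by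
        rw [sum_filter]
        refine sum_le_sum fun F hF ↦ ?_
        split_ifs with hQF
        · obtain ⟨i, hi, hSF⟩ := hQ F (mem_powerset.1 hF) hQF
          calc δ ^ #F * (1 - δ) ^ #(E \ F)
              = if S i ⊆ F then δ ^ #F * (1 - δ) ^ #(E \ F) else 0 := (if_pos hSF).symm
            _ ≤ _ := single_le_sum (f := fun j ↦ if S j ⊆ F then _ else 0)
                (fun j _ ↦ ite_nonneg (hw F) le_rfl) hi
        · exact sum_nonneg fun i _ ↦ ite_nonneg (hw F) le_rfl
    _ = ∑ i ∈ I, ∑ F ∈ E.powerset with S i ⊆ F, δ ^ #F * (1 - δ) ^ #(E \ F) := by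
        rw [sum_comm]; simp only [sum_filter]
    _ = ∑ i ∈ I, δ ^ #(S i) :=
        sum_congr rfl fun i hi ↦
          sum_filter_superset_pow_card_mul_pow_card_sdiff (hSE i hi) δ

theorem SimpleGraph.Walk.card_le_card_pow_of_length_eq_succ {W : Type*} [Fintype W]
    {G : SimpleGraph W} {u v : W} {k : ℕ} (s : Finset (G.Walk u v))
    (hs : ∀ p ∈ s, p.length = k + 1) :
    #s ≤ Fintype.card W ^ k := by
  have hinj : Set.InjOn (fun (p : G.Walk u v) (i : Fin k) ↦ p.getVert (i + 1)) s := by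
    intro p hp q hq hpq
    refine Walk.ext_getVert_le_length ((hs p hp).trans (hs q hq).symm) fun j hj ↦ ?_
    rcases Nat.eq_zero_or_pos j with rfl | hj₀
    · simp only [Walk.getVert_zero]
    rcases hj.eq_or_lt with rfl | hjk
    · rw [Walk.getVert_length, ← (hs q hq).trans (hs p hp).symm, Walk.getVert_length]
    · have := congrFun hpq ⟨j - 1, by have := hs p hp; omega⟩
      simp only at this
      rwa [Nat.sub_add_cancel hj₀] at this
  simpa using card_le_card_of_injOn _ (fun _ _ ↦ mem_univ _) hinj

theorem prox_le_sum_path_pow_length {E : Finset (Sym2 V)} {δ : ℝ} (hδ₀ : 0 ≤ δ) (hδ₁ : δ ≤ 1)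
    (u v : V) :
    prox E δ u v ≤ ∑ p : (fromEdgeSet (E : Set (Sym2 V))).Path u v, δ ^ p.1.length := by
  have hedges : ∀ {F : Finset (Sym2 V)} {x y : V}
      (p : (fromEdgeSet (F : Set (Sym2 V))).Walk x y), p.edges.toFinset ⊆ F := by
    intro F x y p e he
    exact (edgeSet_fromEdgeSet _ ▸ p.edges_subset_edgeSet (List.mem_toFinset.1 he)).1
  have hcard : ∀ p : (fromEdgeSet (E : Set (Sym2 V))).Path u v,
      #p.1.edges.toFinset = p.1.length := fun p ↦ by
    rw [List.toFinset_card_of_nodup p.2.isTrail.edges_nodup, Walk.length_edges]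
  rw [prox, ← sum_filter]
  simp only [← hcard]
  refine sum_filter_pow_card_mul_pow_card_sdiff_le hδ₀ hδ₁ _ univ
    (fun p : (fromEdgeSet (E : Set (Sym2 V))).Path u v ↦ p.1.edges.toFinset)
    (fun p _ ↦ hedges p.1) fun F hFE hreach ↦ ?_
  obtain ⟨q⟩ := hreach
  have hle : fromEdgeSet (F : Set (Sym2 V)) ≤ fromEdgeSet (E : Set (Sym2 V)) :=
    fromEdgeSet_mono (coe_subset.2 hFE)
  refine ⟨⟨q.bypass.mapLe hle, q.bypass_isPath.mapLe hle⟩, mem_univ _, ?_⟩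
  simpa only [Walk.edges_mapLe_eq_edges] using hedges q.bypass

theorem SimpleGraph.sum_path_pow_length_le {W R : Type*} [Fintype W] [DecidableEq W]
    [CommSemiring R] [PartialOrder R] [IsOrderedRing R] {G : SimpleGraph W} [DecidableRel G.Adj]
    {u v : W} {δ : R} (hδ : 0 ≤ δ) {c : ℕ} (hc : 1 ≤ c) (hdist : c ≤ G.dist u v) :
    ∑ p : G.Path u v, δ ^ p.1.length ≤
      ∑ j ∈ Ico (c - 1) (Fintype.card W - 1), (Fintype.card W : R) ^ j * δ ^ (j + 1) := by
  have hlen : ∀ p : G.Path u v, c ≤ p.1.length ∧ p.1.length < Fintype.card W := fun p ↦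
    ⟨hdist.trans (dist_le p.1), p.2.length_lt⟩
  have hmaps : ∀ p ∈ (univ : Finset (G.Path u v)),
      p.1.length - 1 ∈ Ico (c - 1) (Fintype.card W - 1) := fun p _ ↦ by
    have := hlen p; rw [mem_Ico]; omega
  rw [← sum_fiberwise_of_maps_to hmaps]
  refine sum_le_sum fun j _ ↦ ?_
  have hfiber : ∀ p ∈ ({p | p.1.length - 1 = j} : Finset (G.Path u v)), p.1.length = j + 1 :=
    fun p hp ↦ by have := hlen p; have := (mem_filter.1 hp).2; omega
  have hcount : #({p | p.1.length - 1 = j} : Finset (G.Path u v)) ≤ Fintype.card W ^ j := by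
    rw [← card_map (Function.Embedding.subtype _)]
    refine Walk.card_le_card_pow_of_length_eq_succ _ fun p hp ↦ ?_
    obtain ⟨p', hp', rfl⟩ := mem_map.1 hp
    exact hfiber p' hp'
  rw [sum_congr rfl fun p hp ↦ by rw [hfiber p hp], sum_const, nsmul_eq_mul]
  gcongr
  rw [← Nat.cast_pow]
  exact Nat.mono_cast hcount

theorem sum_Ico_pow_mul_pow_succ_le {R : Type*} [Field R] [LinearOrder R] [IsStrictOrderedRing R]
    {x δ : R} (hx : 0 ≤ x) (hδ : 0 ≤ δ) (hxδ : x * δ ≤ 1 / 2) (m N : ℕ) :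
    ∑ j ∈ Ico m N, x ^ j * δ ^ (j + 1) ≤ 2 * x ^ m * δ ^ (m + 1) := by
  have hterm : ∀ j, x ^ j * δ ^ (j + 1) = δ * (x * δ) ^ j := fun j ↦ by ring
  simp only [hterm, ← mul_sum]
  calc δ * ∑ j ∈ Ico m N, (x * δ) ^ j ≤ δ * ((x * δ) ^ m / (1 - x * δ)) :=
        mul_le_mul_of_nonneg_left (geom_sum_Ico_le_of_lt_one (by positivity) (by linarith)) hδ
    _ ≤ δ * ((x * δ) ^ m * 2) := by
        gcongr
        rw [div_le_iff₀ (by linarith)]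
        nlinarith [pow_nonneg (mul_nonneg hx hδ) m]
    _ = 2 * x ^ m * δ ^ (m + 1) := by ring

/-- low-probability path bound. -/
theorem low_probability_path_bound
    (E : Finset (Sym2 V)) (δ : ℝ) (hδ0 : 0 ≤ δ)
    (hδ : δ < 1 / (2 * (Fintype.card V : ℝ)))
    (u v : V) (c : ℕ) (hc : 1 ≤ c)
    (hdist : (SimpleGraph.fromEdgeSet (E : Set (Sym2 V))).dist u v = c) :
    prox E δ u v ≤ 2 * (Fintype.card V : ℝ) ^ (c - 1) * δ ^ c := by
  have hn : (1 : ℝ) ≤ Fintype.card V := Nat.one_le_cast.2 (Fintype.card_pos_iff.2 ⟨u⟩)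
  have hnδ : (Fintype.card V : ℝ) * δ ≤ 1 / 2 := by
    rw [lt_div_iff₀ (by positivity)] at hδ; linarith
  have hδ1 : δ ≤ 1 := by nlinarith [mul_le_mul_of_nonneg_right hn hδ0]
  calc prox E δ u v ≤ ∑ p : (fromEdgeSet (E : Set (Sym2 V))).Path u v, δ ^ p.1.length :=
        prox_le_sum_path_pow_length hδ0 hδ1 u v
    _ ≤ ∑ j ∈ Ico (c - 1) (Fintype.card V - 1), (Fintype.card V : ℝ) ^ j * δ ^ (j + 1) :=
        sum_path_pow_length_le hδ0 hc hdist.ge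
    _ ≤ 2 * (Fintype.card V : ℝ) ^ (c - 1) * δ ^ (c - 1 + 1) :=
        sum_Ico_pow_mul_pow_succ_le (by positivity) hδ0 hnδ _ _
    _ = 2 * (Fintype.card V : ℝ) ^ (c - 1) * δ ^ c := by rw [Nat.sub_add_cancel hc]
end
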